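/- For d ≥ 2 and α ∈ [0,1], let Γ_d(α) be the d×d matrix with all diagonal entries equal to 1, with (i,d)- and (d,i)-entries equal to α for i = 1,...,d−1, and with all other entries equal to 0. Then Γ_d(α) is a tail-dependence matrix if and only if 0 ≤ α ≤ 1/(d−1) (Proposition 4.7). -/

import Mathlib

open MeasureTheory ProbabilityTheory Filter Set

noncomputable section

/-- A Bernoulli-compatible matrix: `B i j = E[X i * X j]` for some random vector `X`
taking values in `{0,1}^d` on some probability space. -/
def IsBernoulliCompatible {d : ℕ} (B : Matrix (Fin d) (Fin d) ℝ) : Prop :=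
  ∃ (Ω : Type) (_ : MeasurableSpace Ω) (μ : Measure Ω),
    IsProbabilityMeasure μ ∧
    ∃ X : Ω → Fin d → ℝ, Measurable X ∧
      (∀ ω i, X ω i = 0 ∨ X ω i = 1) ∧
      (∀ i j, B i j = ∫ ω, X ω i * X ω j ∂μ)

/-- The (lower) tail-dependence coefficient of `Yi` and `Yj` exists and equals `l`:
`P(Yi ≤ u, Yj ≤ u)/u → l` as `u ↓ 0`. -/
def HasTailDepCoeff {Ω : Type} [MeasurableSpace Ω] (μ : Measure Ω)
    (Yi Yj : Ω → ℝ) (l : ℝ) : Prop :=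
  Filter.Tendsto (fun u : ℝ => (μ {ω | Yi ω ≤ u ∧ Yj ω ≤ u}).toReal / u)
    (nhdsWithin 0 (Set.Ioi 0)) (nhds l)

/-- The uniform distribution on `[0,1]`. -/
def stdUniform : Measure ℝ := volume.restrict (Set.Icc (0:ℝ) 1)

/-- A tail-dependence matrix: the matrix of pairwise (lower) tail-dependence coefficients
of some random vector with standard uniform margins. -/
def IsTailDependenceMatrix {d : ℕ} (Λ : Matrix (Fin d) (Fin d) ℝ) : Prop :=
  ∃ (Ω : Type) (_ : MeasurableSpace Ω) (μ : Measure Ω),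
    IsProbabilityMeasure μ ∧
    ∃ Y : Ω → Fin d → ℝ, Measurable Y ∧
      (∀ i, μ.map (fun ω => Y ω i) = stdUniform) ∧
      (∀ i j, HasTailDepCoeff μ (fun ω => Y ω i) (fun ω => Y ω j) (Λ i j))

/-! Necessity is Bonferroni's inequality for the events `{Y i ≤ u, Y k ≤ u}` (`i ≠ k`, `k` the
last index): their probabilities sum to at most `P(Y k ≤ u)` plus the pairwise probabilities
`P(Y i ≤ u, Y j ≤ u)`; dividing by `u` and letting `u ↓ 0` gives `(d - 1) α ≤ 1 + 0`, and
`α ≥ 0` as a limit of nonnegative ratios.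

For sufficiency take a uniform selector `T` independent of i.i.d. uniforms `X`, and let
`Y i = X k` if `T ∈ [iα, (i+1)α)` and `Y i = X i` otherwise. Since `(d - 1) α ≤ 1` these
intervals are disjoint subsets of `[0, 1]`, so every `Y i` is uniform, and for each value of `T`
the pair `(Y i, Y j)` reads either one coordinate of `X` or two distinct ones. Hence
`P(Y i ≤ u, Y k ≤ u) = α u + (1 - α) u²` and `P(Y i ≤ u, Y j ≤ u) = u²` for distinct `i, j ≠ k`. -/

lemma measureReal_sum_le_biUnion_add_sum_offDiag {Ω ι : Type*} [MeasurableSpace Ω]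
    [DecidableEq ι] (μ : Measure Ω) [IsFiniteMeasure μ] {B : ι → Set Ω}
    (hB : ∀ i, MeasurableSet (B i)) (s : Finset ι) :
    ∑ i ∈ s, μ.real (B i) ≤
      μ.real (⋃ i ∈ s, B i) + ∑ p ∈ s.offDiag, μ.real (B p.1 ∩ B p.2) := by
  induction s using Finset.induction_on with
  | empty => simp
  | @insert a s ha ih =>
    have hcross : ∑ i ∈ s, μ.real (B a ∩ B i) + ∑ p ∈ s.offDiag, μ.real (B p.1 ∩ B p.2) ≤
        ∑ p ∈ (insert a s).offDiag, μ.real (B p.1 ∩ B p.2) := by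
      have hdisj : Disjoint ({a} ×ˢ s) s.offDiag := by
        simp only [Finset.disjoint_left, Finset.mem_product, Finset.mem_singleton,
          Finset.mem_offDiag]
        rintro ⟨x, y⟩ ⟨rfl, -⟩ ⟨hx, -⟩
        exact ha hx
      calc _ = ∑ p ∈ {a} ×ˢ s ∪ s.offDiag, μ.real (B p.1 ∩ B p.2) := by
            rw [Finset.sum_union hdisj, Finset.sum_product, Finset.sum_singleton]
        _ ≤ _ := by
          refine Finset.sum_le_sum_of_subset_of_nonneg ?_ fun _ _ _ => measureReal_nonneg
          rw [Finset.offDiag_insert ha]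
          intro p; simp only [Finset.mem_union]; tauto
    have hinter : μ.real (B a ∩ ⋃ i ∈ s, B i) ≤ ∑ i ∈ s, μ.real (B a ∩ B i) := by
      rw [Set.inter_iUnion₂]
      exact measureReal_biUnion_finset_le s _
    have hunion := measureReal_union_add_inter (μ := μ) (s := B a)
      (Finset.measurableSet_biUnion s fun i _ => hB i) (measure_ne_top _ _) (measure_ne_top _ _)
    rw [Finset.sum_insert ha, Finset.set_biUnion_insert]
    linarith

namespace HasTailDepCoeff

variable {Ω : Type} [MeasurableSpace Ω] {μ : Measure Ω} {Yi Yj : Ω → ℝ} {l : ℝ}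

lemma nonneg (h : HasTailDepCoeff μ Yi Yj l) : 0 ≤ l :=
  ge_of_tendsto h <| eventually_nhdsWithin_of_forall fun _ hu =>
    div_nonneg ENNReal.toReal_nonneg (le_of_lt hu)

lemma symm (h : HasTailDepCoeff μ Yi Yj l) : HasTailDepCoeff μ Yj Yi l := by
  simpa only [HasTailDepCoeff, and_comm] using h

lemma sum_le {ι : Type*} [DecidableEq ι] [IsFiniteMeasure μ] {Y : ι → Ω → ℝ}
    (hY : ∀ i, Measurable (Y i)) {Λ : ι → ι → ℝ}
    (h : ∀ i j, HasTailDepCoeff μ (Y i) (Y j) (Λ i j)) (s : Finset ι) (k : ι) :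
    ∑ i ∈ s, Λ i k ≤ Λ k k + ∑ p ∈ s.offDiag, Λ p.1 p.2 := by
  let S (i j : ι) (u : ℝ) : Set Ω := {ω | Y i ω ≤ u ∧ Y j ω ≤ u}
  have hS (u : ℝ) : ∑ i ∈ s, μ.real (S i k u) ≤
      μ.real (S k k u) + ∑ p ∈ s.offDiag, μ.real (S p.1 p.2 u) := by
    refine (measureReal_sum_le_biUnion_add_sum_offDiag μ (fun i => ?_) s).trans
      (add_le_add (measureReal_mono ?_) (Finset.sum_le_sum fun p _ => measureReal_mono ?_))
    · exact (measurableSet_le (hY i) measurable_const).inter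
        (measurableSet_le (hY k) measurable_const)
    · exact Set.iUnion₂_subset fun i _ ω hω => ⟨hω.2, hω.2⟩
    · exact fun ω hω => ⟨hω.1.1, hω.2.1⟩
  refine le_of_tendsto_of_tendsto (tendsto_finsetSum s fun i _ => h i k)
    ((h k k).add (tendsto_finsetSum _ fun p _ => h p.1 p.2)) ?_
  filter_upwards [self_mem_nhdsWithin] with u (hu : 0 < u)
  simp only [← Finset.sum_div, ← add_div]
  exact div_le_div_of_nonneg_right (hS u) hu.le

end HasTailDepCoeff

namespace IsTailDependenceMatrix

variable {d : ℕ} {Λ : Matrix (Fin d) (Fin d) ℝ}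

lemma nonneg (h : IsTailDependenceMatrix Λ) (i j : Fin d) : 0 ≤ Λ i j := by
  obtain ⟨Ω, _, μ, _, Y, _, _, hΛ⟩ := h
  exact (hΛ i j).nonneg

lemma sum_le (h : IsTailDependenceMatrix Λ) (s : Finset (Fin d)) (k : Fin d) :
    ∑ i ∈ s, Λ i k ≤ Λ k k + ∑ p ∈ s.offDiag, Λ p.1 p.2 := by
  obtain ⟨Ω, _, μ, _, Y, hY, _, hΛ⟩ := h
  exact HasTailDepCoeff.sum_le (fun i => (measurable_pi_apply i).comp hY) hΛ s k

end IsTailDependenceMatrix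

lemma hasTailDepCoeff_of_measure_eq {Ω : Type} [MeasurableSpace Ω] {μ : Measure Ω}
    {Yi Yj : Ω → ℝ} {a b : ℝ} (ha : 0 ≤ a) (hb : 0 ≤ b)
    (h : ∀ u ∈ Ioo (0 : ℝ) 1,
      μ {ω | Yi ω ≤ u ∧ Yj ω ≤ u} = ENNReal.ofReal (a * u + b * u ^ 2)) :
    HasTailDepCoeff μ Yi Yj a := by
  have hlim : Tendsto (fun u : ℝ => a + b * u) (nhds 0) (nhds a) := by
    simpa using (by fun_prop : Continuous fun u : ℝ => a + b * u).tendsto 0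
  refine (hlim.mono_left nhdsWithin_le_nhds).congr' ?_
  filter_upwards [Ioo_mem_nhdsGT one_pos] with u hu
  rw [h u hu, ENNReal.toReal_ofReal (by have := hu.1; positivity)]
  field_simp [hu.1.ne']

instance : IsProbabilityMeasure stdUniform := ⟨by simp [stdUniform]⟩

lemma stdUniform_Iic {u : ℝ} (h1 : u ≤ 1) :
    stdUniform (Iic u) = ENNReal.ofReal u := by
  have : Iic u ∩ Icc 0 1 = Icc 0 u := by
    ext x
    simp only [mem_inter_iff, mem_Iic, mem_Icc]
    constructor <;> intro hx <;> refine ⟨?_, ?_⟩ <;> grind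
  rw [stdUniform, Measure.restrict_apply measurableSet_Iic, this, Real.volume_Icc, sub_zero]

lemma stdUniform_Ico {a b : ℝ} (h0 : 0 ≤ a) (h1 : b ≤ 1) :
    stdUniform (Ico a b) = ENNReal.ofReal (b - a) := by
  rw [stdUniform, Measure.restrict_apply measurableSet_Ico,
    inter_eq_left.2 (Ico_subset_Icc_self.trans (Icc_subset_Icc h0 h1)), Real.volume_Ico]

open Classical in
lemma lintegral_ite_mem_stdUniform {A : Set ℝ} (hA : MeasurableSet A) (c₁ c₂ : ENNReal) :
    ∫⁻ t, (if t ∈ A then c₁ else c₂) ∂stdUniform = c₁ * stdUniform A + c₂ * stdUniform Aᶜ := by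
  simpa only [setLIntegral_const, Set.piecewise] using
    lintegral_piecewise (μ := stdUniform) hA (fun _ => c₁) (fun _ => c₂)

lemma pi_stdUniform_le_and_le {ι : Type*} [Fintype ι] [DecidableEq ι] (a b : ι) {u : ℝ} (h0 : 0 ≤ u)
    (h1 : u ≤ 1) :
    Measure.pi (fun _ : ι => stdUniform) {x | x a ≤ u ∧ x b ≤ u} =
      if a = b then ENNReal.ofReal u else ENNReal.ofReal (u ^ 2) := by
  have hmarg (c : ι) : Measure.pi (fun _ : ι => stdUniform) {x | x c ≤ u} = ENNReal.ofReal u := by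
    rw [← stdUniform_Iic h1]
    exact (measurePreserving_eval _ c).measure_preimage measurableSet_Iic.nullMeasurableSet
  split_ifs with hab
  · simpa [hab] using hmarg b
  · have hind := (iIndepFun_pi (X := fun _ : ι => id) (μ := fun _ : ι => stdUniform)
      fun _ => aemeasurable_id).indepFun hab
    calc _ = _ := hind.measure_inter_preimage_eq_mul _ _ measurableSet_Iic measurableSet_Iic
      _ = ENNReal.ofReal u * ENNReal.ofReal u := congr_arg₂ (· * ·) (hmarg a) (hmarg b)
      _ = _ := by rw [sq, ENNReal.ofReal_mul h0]

section SwitchingModel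

variable {ι : Type*} (I : ι → Set ℝ) (k : ι)

open Classical in
def switchIndex (t : ℝ) (i : ι) : ι := if t ∈ I i then k else i

def switchVector (ω : ℝ × (ι → ℝ)) (i : ι) : ℝ := ω.2 (switchIndex I k ω.1 i)

abbrev switchModel (ι : Type*) [Fintype ι] : Measure (ℝ × (ι → ℝ)) :=
  stdUniform.prod (Measure.pi fun _ : ι => stdUniform)

variable {I k}

lemma switchIndex_target (t : ℝ) : switchIndex I k t k = k := by
  unfold switchIndex; split_ifs <;> rfl

lemma switchIndex_eq_target_iff {i : ι} (hi : i ≠ k) (t : ℝ) :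
    switchIndex I k t i = k ↔ t ∈ I i := by
  unfold switchIndex; split_ifs <;> simp_all

lemma switchIndex_ne_switchIndex (hI : Pairwise fun i j => Disjoint (I i) (I j)) {i j : ι}
    (hi : i ≠ k) (hj : j ≠ k) (hij : i ≠ j) (t : ℝ) :
    switchIndex I k t i ≠ switchIndex I k t j := by
  unfold switchIndex
  split_ifs with hti htj
  · exact absurd (hI hij) (not_disjoint_iff.2 ⟨t, hti, htj⟩)
  all_goals grind

lemma measurable_switchVector_apply (hI : ∀ i, MeasurableSet (I i)) (i : ι) :
    Measurable fun ω => switchVector I k ω i := by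
  unfold switchVector switchIndex
  simp only [apply_ite]
  exact Measurable.ite ((hI i).preimage measurable_fst)
    ((measurable_pi_apply k).comp measurable_snd) ((measurable_pi_apply i).comp measurable_snd)

lemma switchModel_apply [Fintype ι] {P : (ι → ℝ) → Prop}
    (hP : MeasurableSet {ω | P (switchVector I k ω)}) :
    switchModel ι {ω | P (switchVector I k ω)} =
      ∫⁻ t, Measure.pi (fun _ => stdUniform) {x | P fun i => x (switchIndex I k t i)}
        ∂stdUniform :=
  Measure.prod_apply hP

lemma map_switchVector_apply [Fintype ι] (hI : ∀ i, MeasurableSet (I i)) (i : ι) :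
    (switchModel ι).map (fun ω => switchVector I k ω i) = stdUniform := by
  ext A hA
  rw [Measure.map_apply (measurable_switchVector_apply hI i) hA]
  refine (switchModel_apply (P := fun y => y i ∈ A)
    (measurable_switchVector_apply hI i hA)).trans ?_
  have hmarg (c : ι) : Measure.pi (fun _ => stdUniform) {x : ι → ℝ | x c ∈ A} = stdUniform A :=
    (measurePreserving_eval _ c).measure_preimage hA.nullMeasurableSet
  simp [hmarg]

lemma switchModel_le_and_le [Fintype ι] [DecidableEq ι] (hI : ∀ i, MeasurableSet (I i))
    (i j : ι) {u : ℝ} (h0 : 0 ≤ u) (h1 : u ≤ 1) :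
    switchModel ι {ω | switchVector I k ω i ≤ u ∧ switchVector I k ω j ≤ u} =
      ∫⁻ t, (if switchIndex I k t i = switchIndex I k t j then ENNReal.ofReal u
        else ENNReal.ofReal (u ^ 2)) ∂stdUniform := by
  rw [switchModel_apply (P := fun y => y i ≤ u ∧ y j ≤ u)]
  · simp_rw [pi_stdUniform_le_and_le _ _ h0 h1]
  · exact (measurableSet_le (measurable_switchVector_apply hI i) measurable_const).inter
      (measurableSet_le (measurable_switchVector_apply hI j) measurable_const)

end SwitchingModel

section SwitchingModelTailDependence

variable {ι : Type} [Fintype ι] [DecidableEq ι] {I : ι → Set ℝ} {k : ι}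

lemma hasTailDepCoeff_switchVector_self (hI : ∀ i, MeasurableSet (I i)) (i : ι) :
    HasTailDepCoeff (switchModel ι) (fun ω => switchVector I k ω i)
      (fun ω => switchVector I k ω i) 1 := by
  refine hasTailDepCoeff_of_measure_eq zero_le_one le_rfl fun u hu => ?_
  rw [switchModel_le_and_le hI i i hu.1.le hu.2.le]
  simp

lemma hasTailDepCoeff_switchVector_target (hI : ∀ i, MeasurableSet (I i)) {i : ι} (hi : i ≠ k)
    {p : ℝ} (hp0 : 0 ≤ p) (hp1 : p ≤ 1) (hIi : stdUniform (I i) = ENNReal.ofReal p) :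
    HasTailDepCoeff (switchModel ι) (fun ω => switchVector I k ω i)
      (fun ω => switchVector I k ω k) p := by
  refine hasTailDepCoeff_of_measure_eq hp0 (sub_nonneg.2 hp1) fun u hu => ?_
  have hu0 := hu.1.le
  rw [switchModel_le_and_le hI i k hu0 hu.2.le]
  classical
  simp_rw [switchIndex_target, switchIndex_eq_target_iff hi]
  rw [lintegral_ite_mem_stdUniform (hI i), prob_compl_eq_one_sub (hI i), hIi,
    ← ENNReal.ofReal_one, ← ENNReal.ofReal_sub _ hp0, ← ENNReal.ofReal_mul hu0,
    ← ENNReal.ofReal_mul (by positivity), ← ENNReal.ofReal_add (by positivity)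
      (mul_nonneg (by positivity) (sub_nonneg.2 hp1))]
  ring_nf

lemma hasTailDepCoeff_switchVector_of_ne (hI : ∀ i, MeasurableSet (I i))
    (hdisj : Pairwise fun i j => Disjoint (I i) (I j)) {i j : ι} (hi : i ≠ k) (hj : j ≠ k)
    (hij : i ≠ j) :
    HasTailDepCoeff (switchModel ι) (fun ω => switchVector I k ω i)
      (fun ω => switchVector I k ω j) 0 := by
  refine hasTailDepCoeff_of_measure_eq le_rfl zero_le_one fun u hu => ?_
  rw [switchModel_le_and_le hI i j hu.1.le hu.2.le]
  simp [switchIndex_ne_switchIndex hdisj hi hj hij]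

end SwitchingModelTailDependence

section Gamma

variable {n : ℕ} {α : ℝ}

def gammaMatrix (n : ℕ) (α : ℝ) : Matrix (Fin (n + 1)) (Fin (n + 1)) ℝ :=
  Matrix.of fun i j => if i = j then 1 else if i = Fin.last n ∨ j = Fin.last n then α else 0

def gammaInterval (α : ℝ) (i : Fin (n + 1)) : Set ℝ := Ico (i * α) ((i + 1) * α)

lemma measurableSet_gammaInterval (α : ℝ) (i : Fin (n + 1)) :
    MeasurableSet (gammaInterval α i) :=
  measurableSet_Ico

lemma pairwise_disjoint_gammaInterval (α : ℝ) :
    Pairwise fun i j : Fin (n + 1) => Disjoint (gammaInterval α i) (gammaInterval α j) := by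
  intro i j hij
  simpa [gammaInterval, add_mul] using
    pairwise_disjoint_Ico_add_zsmul (0 : ℝ) α (show (i : ℤ) ≠ j by omega)

lemma stdUniform_gammaInterval (h0 : 0 ≤ α) (h1 : n * α ≤ 1) {i : Fin (n + 1)}
    (hi : i ≠ Fin.last n) : stdUniform (gammaInterval α i) = ENNReal.ofReal α := by
  have hin : ((i : ℕ) : ℝ) + 1 ≤ n := by
    exact_mod_cast Fin.val_lt_last hi
  rw [gammaInterval, stdUniform_Ico (by positivity) (by nlinarith)]
  ring_nf

lemma hasTailDepCoeff_gamma (h0 : 0 ≤ α) (h1 : n * α ≤ 1) (i j : Fin (n + 1)) :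
    HasTailDepCoeff (switchModel (Fin (n + 1)))
      (fun ω => switchVector (gammaInterval α) (Fin.last n) ω i)
      (fun ω => switchVector (gammaInterval α) (Fin.last n) ω j) (gammaMatrix n α i j) := by
  have hI := measurableSet_gammaInterval (n := n) α
  have target {i : Fin (n + 1)} (hi : i ≠ Fin.last n) :
      HasTailDepCoeff (switchModel (Fin (n + 1)))
        (fun ω => switchVector (gammaInterval α) (Fin.last n) ω i)
        (fun ω => switchVector (gammaInterval α) (Fin.last n) ω (Fin.last n)) α := by
    have hα1 : α ≤ 1 := by
      have : (1 : ℝ) ≤ n := by exact_mod_cast Nat.one_le_of_lt (Fin.val_lt_last hi)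
      nlinarith
    exact hasTailDepCoeff_switchVector_target hI hi h0 hα1 (stdUniform_gammaInterval h0 h1 hi)
  rcases eq_or_ne i j with rfl | hij
  · simpa [gammaMatrix] using hasTailDepCoeff_switchVector_self hI i
  by_cases hj : j = Fin.last n
  · subst hj
    simpa [gammaMatrix, hij] using target hij
  by_cases hi : i = Fin.last n
  · subst hi
    simpa [gammaMatrix, hij] using (target hj).symm
  simpa [gammaMatrix, hij, hi, hj] using
    hasTailDepCoeff_switchVector_of_ne hI (pairwise_disjoint_gammaInterval α) hi hj hij

theorem isTailDependenceMatrix_gammaMatrix (h0 : 0 ≤ α) (h1 : n * α ≤ 1) :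
    IsTailDependenceMatrix (gammaMatrix n α) :=
  have hI := measurableSet_gammaInterval (n := n) α
  ⟨_, inferInstance, switchModel (Fin (n + 1)), inferInstance,
    switchVector (gammaInterval α) (Fin.last n),
    measurable_pi_lambda _ (measurable_switchVector_apply hI), map_switchVector_apply hI,
    hasTailDepCoeff_gamma h0 h1⟩

lemma IsTailDependenceMatrix.gammaMatrix_mul_le_one (h : IsTailDependenceMatrix (gammaMatrix n α)) :
    n * α ≤ 1 := by
  have hbound := h.sum_le (Finset.univ.erase (Fin.last n)) (Fin.last n)
  have hcol : ∑ i ∈ Finset.univ.erase (Fin.last n), gammaMatrix n α i (Fin.last n) = n * α := by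
    rw [Finset.sum_congr rfl fun i hi => show gammaMatrix n α i (Fin.last n) = α by
      simp [gammaMatrix, Finset.ne_of_mem_erase hi]]
    simp
  have hoff : ∑ p ∈ (Finset.univ.erase (Fin.last n)).offDiag, gammaMatrix n α p.1 p.2 = 0 :=
    Finset.sum_eq_zero fun p hp => by
      simp only [Finset.mem_offDiag, Finset.mem_erase] at hp
      simp [gammaMatrix, hp.1.1, hp.2.1.1, hp.2.2]
  rw [hcol, hoff] at hbound
  simpa [gammaMatrix] using hbound

theorem isTailDependenceMatrix_gammaMatrix_iff (hn : 1 ≤ n) :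
    IsTailDependenceMatrix (gammaMatrix n α) ↔ 0 ≤ α ∧ n * α ≤ 1 := by
  refine ⟨fun h => ⟨?_, h.gammaMatrix_mul_le_one⟩,
    fun h => isTailDependenceMatrix_gammaMatrix h.1 h.2⟩
  have h0 : (0 : Fin (n + 1)) ≠ Fin.last n := by simp [Fin.ext_iff]; omega
  simpa [gammaMatrix, h0] using h.nonneg 0 (Fin.last n)

end Gamma

theorem Gamma_tail_dependence_iff_general {d : ℕ} (hd : 2 ≤ d) (α : ℝ) :
    IsTailDependenceMatrix (Matrix.of fun i j : Fin d =>
        if i = j then (1:ℝ) else if i.val = d - 1 ∨ j.val = d - 1 then α else 0) ↔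
      0 ≤ α ∧ α ≤ 1 / ((d : ℝ) - 1) := by
  obtain ⟨n, rfl⟩ : ∃ n, d = n + 1 := ⟨d - 1, by omega⟩
  have hΓ : (Matrix.of fun i j : Fin (n + 1) =>
      if i = j then (1:ℝ) else if i.val = n + 1 - 1 ∨ j.val = n + 1 - 1 then α else 0) =
        gammaMatrix n α := by
    ext i j
    simp [gammaMatrix, Fin.ext_iff]
  have hn : (0 : ℝ) < n := by exact_mod_cast (show 0 < n by omega)
  rw [hΓ, isTailDependenceMatrix_gammaMatrix_iff (by omega)]
  push_cast
  rw [add_sub_cancel_right, le_div_iff₀ hn, mul_comm]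

/-- Proposition 4.7: for `d ≥ 2` and `α ∈ [0,1]`, the matrix `Γ_d(α)` (unit diagonal, entries
`α` in the last row and column off the diagonal, zeros elsewhere) is a tail-dependence matrix
if and only if `0 ≤ α ≤ 1/(d-1)`. -/
theorem Gamma_tail_dependence_iff {d : ℕ} (hd : 2 ≤ d) (α : ℝ) (hα : α ∈ Set.Icc (0:ℝ) 1) :
    IsTailDependenceMatrix (Matrix.of fun i j : Fin d =>
        if i = j then (1:ℝ) else if i.val = d - 1 ∨ j.val = d - 1 then α else 0) ↔
      0 ≤ α ∧ α ≤ 1 / ((d : ℝ) - 1) :=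
  Gamma_tail_dependence_iff_general hd α
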